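/- arXiv:1801.07769 — 3 statements merged into one kernel-verified Lean document; each statement's English description precedes it below -/
import Mathlib

section
/- Under the setup where p : X → ℝ is nonnegative, F_λ(x,ε) = f(x) + ε⁻¹ p(x)² + λε for ε > 0 (with F_λ(x,0) = f(x) if p(x)=0 and +∞ otherwise) and G_σ(x) = f(x) + σ·p(x): there exists λ ≥ 0 such that inf_{x∈A, ε≥0} F_λ(x,ε) = inf_{p(x)=0, x∈A} f(x) if and only if there exists σ ≥ 0 such that inf_{x∈A} G_σ(x) = inf_{p(x)=0, x∈A} f(x). Moreover the greatest lower bounds λ* and σ* of such parameters satisfy λ* = (σ*)²/4. -/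
/-- The smooth penalty function `F_λ(x,ε)`, with the convention `F_λ(x,0) = f(x)` if
`p(x) = 0` and `+∞` otherwise. -/
noncomputable def smoothPen {X : Type*} (f p : X → ℝ) (l : ℝ) (x : X) (ε : ℝ) : EReal :=
  if ε = 0 then (if p x = 0 then (f x : EReal) else ⊤)
  else ((f x + (1 / ε) * (p x) ^ 2 + l * ε : ℝ) : EReal)

lemma ereal_le_of_forall_add (a : EReal) (b : ℝ)
    (h : ∀ δ : ℝ, 0 < δ → a ≤ ((b + δ : ℝ) : EReal)) : a ≤ (b : EReal) := by
  induction a using EReal.rec with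
  | bot => exact bot_le
  | coe r =>
    rw [EReal.coe_le_coe_iff]
    refine le_of_forall_pos_le_add fun δ hδ => ?_
    exact_mod_cast h δ hδ
  | top => exact absurd (top_le_iff.1 (h 1 one_pos)) (EReal.coe_ne_top _)

lemma inner_inf {X : Type*} (f p : X → ℝ) (l : ℝ) (hl : 0 ≤ l) (x : X) (hpx : 0 ≤ p x) :
    (⨅ ε : {ε : ℝ // 0 ≤ ε}, smoothPen f p l x ε.1)
      = ((f x + 2 * Real.sqrt l * p x : ℝ) : EReal) := by
  have hs : Real.sqrt l * Real.sqrt l = l := Real.mul_self_sqrt hl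
  refine le_antisymm ?_ (le_iInf fun ε => ?_)
  · refine ereal_le_of_forall_add _ _ fun δ hδ => ?_
    rcases eq_or_lt_of_le hpx with hp0 | hp0
    · refine (iInf_le _ ⟨0, le_rfl⟩).trans ?_
      have h1 : smoothPen f p l x 0 = ((f x : ℝ) : EReal) := by simp [smoothPen, ← hp0]
      rw [h1, EReal.coe_le_coe_iff, ← hp0]
      nlinarith
    · rcases eq_or_lt_of_le hl with hl0 | hl0
      · have hε : (0:ℝ) < p x ^ 2 / δ := by positivity
        refine (iInf_le _ ⟨p x ^ 2 / δ, hε.le⟩).trans ?_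
        simp only [smoothPen, if_neg hε.ne', EReal.coe_le_coe_iff, ← hl0]
        rw [Real.sqrt_zero]
        have : 1 / (p x ^ 2 / δ) * p x ^ 2 = δ := by field_simp
        nlinarith
      · have hsl : (0:ℝ) < Real.sqrt l := Real.sqrt_pos.2 hl0
        have hε : (0:ℝ) < p x / Real.sqrt l := by positivity
        refine (iInf_le _ ⟨p x / Real.sqrt l, hε.le⟩).trans ?_
        simp only [smoothPen, if_neg hε.ne', EReal.coe_le_coe_iff]
        have h1 : 1 / (p x / Real.sqrt l) * p x ^ 2 = Real.sqrt l * p x := by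
          field_simp
        have h2 : l * (p x / Real.sqrt l) = Real.sqrt l * p x := by
          field_simp; nlinarith
        rw [h1, h2]; linarith
  · obtain ⟨ε, hε⟩ := ε
    rcases eq_or_lt_of_le hε with h0 | h0
    · simp only [smoothPen, if_pos h0.symm]
      split
      · rename_i hpx0
        rw [EReal.coe_le_coe_iff, hpx0]; ring_nf; exact le_rfl
      · exact le_top
    · simp only [smoothPen, if_neg h0.ne', EReal.coe_le_coe_iff]
      have hinv : ε * (1 / ε) = 1 := by field_simp
      nlinarith [sq_nonneg (p x - Real.sqrt l * ε), hinv, h0, mul_pos h0 h0]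

/-- Theorem 2: the smooth penalty function `F_λ` is globally exact iff the
standard penalty function `G_σ(x) = f(x) + σ·p(x)` is globally exact, and the exact penalty
parameters satisfy `λ* = (σ*)²/4`. -/
theorem smooth_penalty_global_exactness_equiv {X : Type*} (A : Set X) (f p : X → ℝ)
    (hp : ∀ x, 0 ≤ p x) (hfeas : {x | x ∈ A ∧ p x = 0}.Nonempty)
    (hbdd : BddBelow (f '' {x | x ∈ A ∧ p x = 0})) :
    let fstar : ℝ := sInf (f '' {x | x ∈ A ∧ p x = 0})
    let C : ℝ → Prop := fun l =>
      (⨅ x : A, ⨅ ε : {ε : ℝ // 0 ≤ ε}, smoothPen f p l x.1 ε.1) = (fstar : EReal)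
    let D : ℝ → Prop := fun σ =>
      (⨅ x : A, ((f x.1 + σ * p x.1 : ℝ) : EReal)) = (fstar : EReal)
    ((∃ l ≥ (0 : ℝ), C l) ↔ (∃ σ ≥ (0 : ℝ), D σ)) ∧
    ((∃ l ≥ (0 : ℝ), C l) →
      sInf {l : ℝ | 0 ≤ l ∧ C l} = (sInf {σ : ℝ | 0 ≤ σ ∧ D σ}) ^ 2 / 4) := by
  intro fstar C D
  -- C l ↔ D (2√l) for l ≥ 0
  have hCD : ∀ l : ℝ, 0 ≤ l → (C l ↔ D (2 * Real.sqrt l)) := by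
    intro l hl
    have : (⨅ x : A, ⨅ ε : {ε : ℝ // 0 ≤ ε}, smoothPen f p l x.1 ε.1)
        = ⨅ x : A, ((f x.1 + 2 * Real.sqrt l * p x.1 : ℝ) : EReal) :=
      iInf_congr fun x => inner_inf f p l hl x.1 (hp x.1)
    simp only [C, D, this]
  have hsq : ∀ σ : ℝ, 0 ≤ σ → 2 * Real.sqrt (σ ^ 2 / 4) = σ := by
    intro σ hσ
    rw [show σ ^ 2 / 4 = (σ / 2) ^ 2 by ring, Real.sqrt_sq (by linarith)]
    ring
  have hDC : ∀ σ : ℝ, 0 ≤ σ → (C (σ ^ 2 / 4) ↔ D σ) := by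
    intro σ hσ
    rw [hCD _ (by positivity), hsq σ hσ]
  have hiff : (∃ l ≥ (0 : ℝ), C l) ↔ (∃ σ ≥ (0 : ℝ), D σ) := by
    constructor
    · rintro ⟨l, hl, hCl⟩
      exact ⟨2 * Real.sqrt l, by positivity, (hCD l hl).1 hCl⟩
    · rintro ⟨σ, hσ, hDσ⟩
      exact ⟨σ ^ 2 / 4, by positivity, (hDC σ hσ).2 hDσ⟩
  refine ⟨hiff, ?_⟩
  rintro hex
  obtain ⟨σ0, hσ0, hDσ0⟩ := hiff.1 hex
  have hSC : {l : ℝ | 0 ≤ l ∧ C l} = (fun σ => σ ^ 2 / 4) '' {σ : ℝ | 0 ≤ σ ∧ D σ} := by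
    ext l
    constructor
    · rintro ⟨hl, hCl⟩
      refine ⟨2 * Real.sqrt l, ⟨by positivity, (hCD l hl).1 hCl⟩, ?_⟩
      have : (2 * Real.sqrt l) ^ 2 = 4 * l := by
        have := Real.sq_sqrt hl
        nlinarith
      show (2 * Real.sqrt l) ^ 2 / 4 = l
      rw [this]; ring
    · rintro ⟨σ, ⟨hσ, hDσ⟩, rfl⟩
      exact ⟨by positivity, (hDC σ hσ).2 hDσ⟩
  set S := {σ : ℝ | 0 ≤ σ ∧ D σ} with hS
  have hne : S.Nonempty := ⟨σ0, hσ0, hDσ0⟩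
  have hbd : BddBelow S := ⟨0, fun σ hσ => hσ.1⟩
  have hσstar : 0 ≤ sInf S := le_csInf hne fun σ hσ => hσ.1
  -- use the monotone function q σ = (max σ 0)^2/4
  have hmono : Monotone (fun σ : ℝ => (max σ 0) ^ 2 / 4) := by
    intro a b hab
    have h1 : max a 0 ≤ max b 0 := max_le_max hab le_rfl
    have h2 : (0:ℝ) ≤ max a 0 := le_max_right _ _
    simp only
    nlinarith
  have hcont : ContinuousAt (fun σ : ℝ => (max σ 0) ^ 2 / 4) (sInf S) :=
    (((continuous_id.max continuous_const).pow 2).div_const 4).continuousAt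
  have hq : (fun σ : ℝ => (max σ 0) ^ 2 / 4) (sInf S)
      = sInf ((fun σ : ℝ => (max σ 0) ^ 2 / 4) '' S) :=
    Monotone.map_csInf_of_continuousAt hcont hmono hne hbd
  have himg : (fun σ : ℝ => (max σ 0) ^ 2 / 4) '' S = (fun σ : ℝ => σ ^ 2 / 4) '' S := by
    refine Set.image_congr fun σ hσ => ?_
    rw [max_eq_left hσ.1]
  rw [hSC, ← himg, ← hq]
  simp only
  rw [max_eq_left hσstar]
end

section
/- Let d ≥ 0, c ≥ 0 (playing the role of ‖w‖), and λ > c². Then inf_{ε > 0} [ (1/ε)(d² - 2εc·d) + λε ] ≥ 2(√λ - c)·d. Consequently, if f(x) + σ·p(x) ≥ f* for all x ∈ A with σ = 2(√λ - ‖w‖) ≥ σ*, and F_λ(x,ε) = f(x) + ε⁻¹ d(0,Φ(x) - εw)² + λε, then inf_{ε≥0} F_λ(x,ε) ≥ f* for all x ∈ A. -/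
lemma key_ineq (d c l : ℝ) (hd : 0 ≤ d) (hl : c ^ 2 < l) :
    ∀ ε : ℝ, 0 < ε →
      2 * (Real.sqrt l - c) * d ≤ (1 / ε) * (d ^ 2 - 2 * ε * c * d) + l * ε := by
  intro ε hε
  have hl0 : 0 ≤ l := le_of_lt (lt_of_le_of_lt (sq_nonneg c) hl)
  have hsq : Real.sqrt l ^ 2 = l := Real.sq_sqrt hl0
  have h1 : 0 ≤ (d - Real.sqrt l * ε) ^ 2 := sq_nonneg _
  have h2 : 2 * Real.sqrt l * d ≤ d ^ 2 / ε + l * ε := by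
    rw [div_add' _ _ _ (ne_of_gt hε), le_div_iff₀ hε]
    have key : d ^ 2 - 2 * Real.sqrt l * d * ε + l * (ε * ε) =
        (d - Real.sqrt l * ε) ^ 2 := by
      rw [sub_sq, mul_pow, hsq]; ring
    nlinarith [key]
  have : (1 / ε) * (d ^ 2 - 2 * ε * c * d) = d ^ 2 / ε - 2 * c * d := by
    field_simp
  rw [this]
  nlinarith

/-- lower-bound half of Theorem 3: for `d ≥ 0`, `c ≥ 0`, `λ > c²`, the value
`(1/ε)(d² - 2εcd) + λε ≥ 2(√λ - c)d` for all `ε > 0`; consequently, if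
`f(x) + 2(√λ - ‖w‖)·d(0,Φ(x)) ≥ f*` on `A`, then the shifted smooth penalty function
satisfies `F_λ(x,ε) ≥ f*` for all `x ∈ A`, `ε > 0`. -/
theorem shifted_penalty_lower_bound {X Y : Type*} [NormedAddCommGroup Y] [NormedSpace ℝ Y]
    (d c l : ℝ) (hd : 0 ≤ d) (hc : 0 ≤ c) (hl : c ^ 2 < l)
    (A : Set X) (f : X → ℝ) (Φ : X → Set Y) (w : Y) (hw : ‖w‖ = c) (fstar : ℝ)
    (hne : ∀ x, (Φ x).Nonempty)
    (hG : ∀ x ∈ A, fstar ≤ f x + (2 * (Real.sqrt l - ‖w‖)) * Metric.infDist 0 (Φ x)) :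
    (∀ ε : ℝ, 0 < ε →
      2 * (Real.sqrt l - c) * d ≤ (1 / ε) * (d ^ 2 - 2 * ε * c * d) + l * ε) ∧
    (∀ x ∈ A, ∀ ε : ℝ, 0 < ε →
      fstar ≤ f x + ε⁻¹ * (Metric.infDist 0 ((fun s => s - ε • w) '' (Φ x))) ^ 2 + l * ε) := by
  constructor
  · exact key_ineq d c l hd hl
  · intro x hx ε hε
    set p := Metric.infDist 0 (Φ x) with hp
    have hp0 : 0 ≤ p := Metric.infDist_nonneg
    set q := Metric.infDist 0 ((fun s => s - ε • w) '' (Φ x)) with hq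
    have hq0 : 0 ≤ q := Metric.infDist_nonneg
    -- q = infDist (ε • w) (Φ x)
    have hiso : Isometry (fun s : Y => s - ε • w) := Isometry.of_dist_eq (by
      intro a b; simp [dist_eq_norm])
    have himg : q = Metric.infDist (ε • w) (Φ x) := by
      have := Metric.infDist_image (t := Φ x) (x := ε • w) hiso
      simpa using this
    have htri : p ≤ q + ε * c := by
      rw [himg]
      have := Metric.infDist_le_infDist_add_dist (x := (0 : Y)) (y := ε • w) (s := Φ x)
      have hdist : dist (0 : Y) (ε • w) = ε * c := by
        rw [dist_comm, dist_zero_right, norm_smul, hw, Real.norm_eq_abs,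
          abs_of_pos hε]
      linarith [this, hdist ▸ this]
    -- q² ≥ p² - 2εcp
    have hsq : p ^ 2 - 2 * ε * c * p ≤ q ^ 2 := by
      rcases le_or_gt (ε * c) p with h | h
      · have hle : (p - ε * c) ^ 2 ≤ q ^ 2 := by
          apply sq_le_sq' <;> linarith
        nlinarith [hle, sq_nonneg (ε * c)]
      · have hneg : p * (p - 2 * (ε * c)) ≤ 0 :=
          mul_nonpos_of_nonneg_of_nonpos hp0 (by linarith)
        nlinarith [sq_nonneg q]
    have hkey := key_ineq p c l hp0 hl ε hε
    have h1 : 2 * (Real.sqrt l - c) * p ≤ ε⁻¹ * q ^ 2 + l * ε := by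
      have : (1 / ε) * (p ^ 2 - 2 * ε * c * p) ≤ ε⁻¹ * q ^ 2 := by
        rw [one_div]
        exact mul_le_mul_of_nonneg_left hsq (by positivity)
      linarith
    have := hG x hx
    rw [hw] at this
    linarith
end

section
/- Let φ(t) = t/(1-t) for t ∈ [0,1) and φ(t) = +∞ for t ≥ 1. With f as in Example 2 (any c ≥ 0), the penalty function G_σ[φ](x) = f(x) + σ·√(φ(max{0,x}²)) satisfies G_σ[φ](x) ≥ 0 for all x ∈ ℝ if and only if σ ≥ 1. -/
/-- The piecewise function of Example 2. -/
noncomputable def exampleF (c : ℝ) (x : ℝ) : ℝ :=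
  if x ≤ 1 then -x
  else if x < c + 1 then -x ^ 2 / 2 - 1 / 2
  else -(c + 1) * x + c ^ 2 / 2 + c

/-- Example 2, continued: with `φ(t) = t/(1-t)` for `t ∈ [0,1)` and
`φ(t) = +∞` for `t ≥ 1`, the penalty function `G_σ[φ](x) = f(x) + σ·√(φ(max{0,x}²))`
satisfies `G_σ[φ] ≥ 0` everywhere iff `σ ≥ 1` (where `x` with `max{0,x}² ≥ 1` give the
value `+∞ ≥ 0` automatically). -/
theorem example2_nonlinear_exact_penalty_parameter (c : ℝ) (hc : 0 ≤ c) :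
    ∀ σ : ℝ,
      (∀ x : ℝ, (max 0 x) ^ 2 < 1 →
        0 ≤ exampleF c x + σ * Real.sqrt ((max 0 x) ^ 2 / (1 - (max 0 x) ^ 2))) ↔
      1 ≤ σ := by
  intro σ
  constructor
  · intro h
    by_contra hσ
    push_neg at hσ
    set s := max σ 0 with hs
    have hs0 : 0 ≤ s := le_max_right _ _
    have hσs : σ ≤ s := le_max_left _ _
    have hs1 : s < 1 := max_lt hσ one_pos
    set x := Real.sqrt ((1 - s ^ 2) / 2) with hxdef
    have hnn : 0 ≤ (1 - s ^ 2) / 2 := by nlinarith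
    have hx0 : 0 < x := Real.sqrt_pos.2 (by nlinarith)
    have hx2 : x ^ 2 = (1 - s ^ 2) / 2 := Real.sq_sqrt hnn
    have hx1 : x ^ 2 < 1 := by nlinarith
    have hm : max 0 x = x := max_eq_right hx0.le
    have hcond := h x (by rw [hm]; exact hx1)
    rw [hm] at hcond
    have hxle : x ≤ 1 := by nlinarith
    rw [exampleF, if_pos hxle] at hcond
    have h1 : 0 < 1 - x ^ 2 := by nlinarith
    set t := Real.sqrt (x ^ 2 / (1 - x ^ 2)) with htdef
    have ht0 : 0 ≤ t := Real.sqrt_nonneg _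
    have ht2 : t ^ 2 = x ^ 2 / (1 - x ^ 2) :=
      Real.sq_sqrt (by positivity)
    have ht2' : t ^ 2 * (1 - x ^ 2) = x ^ 2 := by
      rw [ht2]; field_simp
    have hst : x ≤ s * t := by nlinarith
    have hsq : x * x ≤ (s * t) * (s * t) :=
      mul_le_mul hst hst hx0.le (hx0.le.trans hst)
    nlinarith [hsq, ht2', hx2, mul_pos hx0 hx0]
  · intro hσ x hx
    have hm0 : 0 ≤ max 0 x := le_max_left _ _
    have hm1 : max 0 x < 1 := by nlinarith
    rcases le_or_gt x 0 with hxle | hxpos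
    · have hm : max 0 x = 0 := max_eq_left hxle
      rw [hm, exampleF, if_pos (hxle.trans zero_le_one)]
      simp
      linarith
    · have hm : max 0 x = x := max_eq_right hxpos.le
      rw [hm] at hx hm1 ⊢
      rw [exampleF, if_pos hm1.le]
      have h1 : 0 < 1 - x ^ 2 := by nlinarith
      set t := Real.sqrt (x ^ 2 / (1 - x ^ 2)) with htdef
      have ht0 : 0 ≤ t := Real.sqrt_nonneg _
      have ht2 : t ^ 2 = x ^ 2 / (1 - x ^ 2) := Real.sq_sqrt (by positivity)
      have ht2' : t ^ 2 * (1 - x ^ 2) = x ^ 2 := by rw [ht2]; field_simp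
      have htx : x ≤ t := by nlinarith
      nlinarith
end
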